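/- Let N ≥ 2, 0 ≤ α ≤ 1 and θ, a, σ ∈ ℝ. Let A be a random N×N matrix with zero diagonal whose off-diagonal entries {A_{ij} : i≠j} are mutually independent, each taking the value 1 with probability α and 0 with probability 1−α. Let y = (y_1,…,y_N) be a random vector independent of A such that each product y_i y_j is integrable, E[y_i²] = σ² for all i and E[y_i y_j] = 0 for i ≠ j. Define z = (I + θaA)y and the centered signal z̃ = z − z̄·1_N where z̄ = (1/N)∑_i z_i. Then E[‖z̃‖²] = σ²(N−1)·(1 − 2θaα + θ²a²α((N−1)(1−α) + α)). -/

import Mathlib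

/-!
With `M = 1 + θa A` and `P = I - 11ᵀ/N`, the centered squared norm is the quadratic form
`yᵀ (Mᵀ P M) y`. As `A` is independent of `y` and `y` has second-moment matrix `σ² I`,
its expectation is `σ² ∑ⱼ E[(Mᵀ P M)ⱼⱼ]`. Because `A` has a zero diagonal and `0/1`
entries, the `j`-th diagonal entry depends only on the column sum `Sⱼ = ∑ᵢ Aᵢⱼ`: it is
`1 + θ²a² Sⱼ - (1 + θa Sⱼ)² / N`. Finally `Sⱼ` is a sum of `N - 1` pairwise independent
Bernoulli(α) variables, so `E Sⱼ = (N-1)α` and `Var Sⱼ = (N-1)α(1-α)`.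
-/

open MeasureTheory ProbabilityTheory Matrix Finset

section Centering

variable {ι : Type*}

theorem Finset.sum_sub_average_sq (s : Finset ι) (w : ι → ℝ) :
    ∑ i ∈ s, (w i - (∑ j ∈ s, w j) / #s) ^ 2
      = ∑ i ∈ s, w i ^ 2 - (∑ i ∈ s, w i) ^ 2 / #s := by
  rcases s.eq_empty_or_nonempty with rfl | hs
  · simp
  have hcard : (#s : ℝ) ≠ 0 := by exact_mod_cast hs.card_pos.ne'
  simp only [sub_sq, sum_add_distrib, sum_sub_distrib, sum_const, nsmul_eq_mul, ← sum_mul,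
    mul_assoc, ← mul_sum]
  field_simp
  ring

variable [Fintype ι]

/-- The Gram matrix `Mᵀ P M` of the columns of `M` after centering, `P = I - 11ᵀ/n`. -/
noncomputable def centeredGram (M : Matrix ι ι ℝ) : Matrix ι ι ℝ :=
  of fun j l => ∑ i, M i j * M i l - (∑ i, M i j) * (∑ i, M i l) / Fintype.card ι

theorem sum_sub_average_mulVec_sq (M : Matrix ι ι ℝ) (v : ι → ℝ) :
    ∑ i, ((M *ᵥ v) i - (∑ j, (M *ᵥ v) j) / Fintype.card ι) ^ 2
      = ∑ j, ∑ l, centeredGram M j l * (v j * v l) := by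
  have hsq : ∀ w : ι → ℝ,
      (∑ j, w j * v j) ^ 2 = ∑ j, ∑ l, w j * w l * (v j * v l) := fun w => by
    simp only [sq, sum_mul_sum]
    exact sum_congr rfl fun j _ => sum_congr rfl fun l _ => by ring
  have hcol : ∑ i, (M *ᵥ v) i = ∑ j, (∑ i, M i j) * v j := by
    simp only [mulVec, dotProduct, sum_mul]
    exact sum_comm
  rw [← card_univ, sum_sub_average_sq, card_univ, hcol, hsq]
  simp only [mulVec, dotProduct, hsq, centeredGram, of_apply, sub_mul, sum_sub_distrib]
  congr 1
  · simp only [sum_mul]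
    rw [sum_comm]
    exact sum_congr rfl fun j _ => sum_comm
  · simp only [sum_div, div_mul_eq_mul_div]

theorem centeredGram_one_add_smul_apply_self [DecidableEq ι] (A : Matrix ι ι ℝ) (t : ℝ)
    (j : ι) (h01 : ∀ i, A i j = 0 ∨ A i j = 1) (hjj : A j j = 0) :
    centeredGram (1 + t • A) j j
      = 1 + t ^ 2 * ∑ i, A i j - (1 + t * ∑ i, A i j) ^ 2 / Fintype.card ι := by
  have hsq : ∀ i, A i j * A i j = A i j := fun i => by rcases h01 i with h | h <;> simp [h]
  have hsum : ∑ i, (1 + t • A) i j = 1 + t * ∑ i, A i j := by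
    simp [Matrix.add_apply, one_apply, sum_add_distrib, mul_sum]
  have hsum_sq : ∑ i, (1 + t • A) i j * (1 + t • A) i j = 1 + t ^ 2 * ∑ i, A i j := by
    have hentry : ∀ i,
        (1 + t • A) i j * (1 + t • A) i j = (1 : Matrix ι ι ℝ) i j + t ^ 2 * A i j := by
      intro i
      rcases eq_or_ne i j with rfl | h
      · simp [hjj]
      · simp [one_apply_ne h, mul_mul_mul_comm, hsq, sq]
    rw [sum_congr rfl fun i _ => hentry i, sum_add_distrib, ← mul_sum]
    simp [one_apply]
  simp only [centeredGram, of_apply, hsum, hsum_sq, sq]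

theorem continuous_centeredGram_one_add_smul_of [DecidableEq ι] (t : ℝ) (j l : ι) :
    Continuous fun x : ι → ι → ℝ => centeredGram (1 + t • of x) j l := by
  simp only [centeredGram, of_apply]
  fun_prop

end Centering

section Moments

variable {Ω ι : Type*} [MeasurableSpace Ω] {μ : Measure Ω}

theorem integral_eq_measureReal_of_zero_or_one {X : Ω → ℝ} (hX : Measurable X)
    (h01 : ∀ ω, X ω = 0 ∨ X ω = 1) : ∫ ω, X ω ∂μ = μ.real {ω | X ω = 1} := by
  have hind : ∀ ω, X ω = {ω | X ω = 1}.indicator 1 ω := fun ω => by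
    rcases h01 ω with h | h <;> simp [h]
  rw [integral_congr_ae (ae_of_all μ hind)]
  exact integral_indicator_one (hX (measurableSet_singleton 1))

theorem memLp_of_zero_or_one [IsFiniteMeasure μ] {X : Ω → ℝ} (hX : AEStronglyMeasurable X μ)
    (h01 : ∀ ω, X ω = 0 ∨ X ω = 1) (p : ENNReal) : MemLp X p μ :=
  MemLp.of_bound hX 1 (ae_of_all _ fun ω => by rcases h01 ω with h | h <;> simp [h])

theorem variance_of_zero_or_one [IsProbabilityMeasure μ] {X : Ω → ℝ}
    (hX : AEStronglyMeasurable X μ) (h01 : ∀ ω, X ω = 0 ∨ X ω = 1) :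
    Var[X; μ] = μ[X] * (1 - μ[X]) := by
  have hsq : X ^ 2 = X := funext fun ω => by rcases h01 ω with h | h <;> simp [h]
  rw [variance_eq_sub (memLp_of_zero_or_one hX h01 2), hsq]
  ring

theorem integral_sum_sq_of_pairwise_indepFun [IsProbabilityMeasure μ] {s : Finset ι}
    {X : ι → Ω → ℝ} {p : ℝ} (hX : ∀ k ∈ s, AEStronglyMeasurable (X k) μ)
    (h01 : ∀ k ∈ s, ∀ ω, X k ω = 0 ∨ X k ω = 1) (hp : ∀ k ∈ s, μ[X k] = p)
    (hindep : Set.Pairwise s fun k l => X k ⟂ᵢ[μ] X l) :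
    ∫ ω, (∑ k ∈ s, X k ω) ^ 2 ∂μ = #s * p * (1 - p) + (#s * p) ^ 2 := by
  have hL2 : ∀ k ∈ s, MemLp (X k) 2 μ := fun k hk =>
    memLp_of_zero_or_one (hX k hk) (h01 k hk) 2
  have hmean : μ[∑ k ∈ s, X k] = #s * p := by
    simp only [Finset.sum_apply]
    rw [integral_finsetSum s fun k hk => (hL2 k hk).integrable one_le_two,
      sum_eq_card_nsmul hp, nsmul_eq_mul]
  have hvar := IndepFun.variance_sum hL2 hindep
  rw [variance_eq_sub (memLp_finsetSum' s hL2), hmean,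
    sum_eq_card_nsmul (f := fun k => Var[X k; μ]) fun k hk => by
      rw [variance_of_zero_or_one (hX k hk) (h01 k hk), hp k hk]] at hvar
  simp only [nsmul_eq_mul, Pi.pow_apply, Finset.sum_apply] at hvar
  linarith

theorem integrable_comp_of_forall_mem_isCompact [IsFiniteMeasure μ] {E : Type*}
    [TopologicalSpace E] [MeasurableSpace E] [OpensMeasurableSpace E] {X : Ω → E}
    (hX : Measurable X) {K : Set E} (hK : IsCompact K) (hXK : ∀ ω, X ω ∈ K) {f : E → ℝ}
    (hf : Continuous f) : Integrable (fun ω => f (X ω)) μ := by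
  obtain ⟨C, hC⟩ := hK.exists_bound_of_continuousOn hf.continuousOn
  exact Integrable.of_bound (hf.measurable.comp hX).aestronglyMeasurable C
    (ae_of_all _ fun ω => hC _ (hXK ω))

theorem integral_sum_mul_mul_of_indepFun [Fintype ι] {E : Type*} [MeasurableSpace E]
    {X : Ω → E} {y : Ω → ι → ℝ} (hXy : X ⟂ᵢ[μ] y) {c : E → Matrix ι ι ℝ}
    (hc : ∀ j l, Measurable fun x => c x j l)
    (hc_int : ∀ j l, Integrable (fun ω => c (X ω) j l) μ)
    {σ : ℝ} (hy_int : ∀ j l, Integrable (fun ω => y ω j * y ω l) μ)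
    (hvar : ∀ j, ∫ ω, y ω j ^ 2 ∂μ = σ ^ 2)
    (hcov : ∀ j l, j ≠ l → ∫ ω, y ω j * y ω l ∂μ = 0) :
    ∫ ω, ∑ j, ∑ l, c (X ω) j l * (y ω j * y ω l) ∂μ
      = σ ^ 2 * ∑ j, ∫ ω, c (X ω) j j ∂μ := by
  have hindep : ∀ j l, (fun ω => c (X ω) j l) ⟂ᵢ[μ] fun ω => y ω j * y ω l := fun j l =>
    hXy.comp (hc j l) ((measurable_pi_apply j).mul (measurable_pi_apply l))
  have hsplit : ∀ j l, ∫ ω, c (X ω) j l * (y ω j * y ω l) ∂μ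
      = (∫ ω, c (X ω) j l ∂μ) * ∫ ω, y ω j * y ω l ∂μ := fun j l =>
    (hindep j l).integral_fun_mul_eq_mul_integral (hc_int j l).aestronglyMeasurable
      (hy_int j l).aestronglyMeasurable
  have hint : ∀ j l, Integrable (fun ω => c (X ω) j l * (y ω j * y ω l)) μ := fun j l =>
    (hindep j l).integrable_mul (hc_int j l) (hy_int j l)
  rw [integral_finsetSum _ fun j _ => integrable_finsetSum _ fun l _ => hint j l, mul_sum]
  refine sum_congr rfl fun j _ => ?_
  rw [integral_finsetSum _ fun l _ => hint j l,
    sum_eq_single j (fun l _ hl => by rw [hsplit, hcov j l hl.symm, mul_zero]) (by simp),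
    hsplit]
  simp only [← sq, hvar, mul_comm]

end Moments

section ErdosRenyi

variable {Ω ι : Type*} [MeasurableSpace Ω] {μ : Measure Ω} [Fintype ι] [DecidableEq ι]

theorem integrable_centeredGram_one_add_smul [IsFiniteMeasure μ] {A : Ω → Matrix ι ι ℝ}
    (hA : ∀ i j, Measurable fun ω => A ω i j) (h01 : ∀ ω i j, A ω i j = 0 ∨ A ω i j = 1)
    (t : ℝ) (j l : ι) : Integrable (fun ω => centeredGram (1 + t • A ω) j l) μ :=
  integrable_comp_of_forall_mem_isCompact
    (measurable_pi_lambda _ fun i => measurable_pi_lambda _ fun k => hA i k)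
    (isCompact_univ_pi fun _ => isCompact_univ_pi fun _ => isCompact_Icc (a := 0) (b := 1))
    (fun ω => Set.mem_univ_pi.2 fun i => Set.mem_univ_pi.2 fun k => by
      rcases h01 ω i k with h | h <;> simp [h])
    (continuous_centeredGram_one_add_smul_of t j l)

theorem integral_centeredGram_one_add_smul_apply_self [IsProbabilityMeasure μ]
    {A : Ω → Matrix ι ι ℝ} {j : ι} {p : ℝ} (hA : ∀ i, Measurable fun ω => A ω i j)
    (h01 : ∀ ω i, A ω i j = 0 ∨ A ω i j = 1)
    (hjj : ∀ ω, A ω j j = 0) (hp : ∀ i, i ≠ j → ∫ ω, A ω i j ∂μ = p)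
    (hindep : Set.Pairwise (univ.erase j : Finset ι)
      fun i k => (fun ω => A ω i j) ⟂ᵢ[μ] fun ω => A ω k j) (t : ℝ) :
    ∫ ω, centeredGram (1 + t • A ω) j j ∂μ
      = 1 + t ^ 2 * ((Fintype.card ι - 1) * p)
        - (1 + 2 * t * ((Fintype.card ι - 1) * p)
          + t ^ 2 * ((Fintype.card ι - 1) * p * (1 - p) + ((Fintype.card ι - 1) * p) ^ 2))
          / Fintype.card ι := by
  set n : ℝ := (Fintype.card ι : ℝ) with hn
  set S : Ω → ℝ := fun ω => ∑ i ∈ univ.erase j, A ω i j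
  have hcard : (#(univ.erase j) : ℝ) = n - 1 := by
    rw [cast_card_erase_of_mem (mem_univ j), card_univ]
  have hL2 : MemLp S 2 μ :=
    memLp_finsetSum _ fun i _ => memLp_of_zero_or_one (hA i).aestronglyMeasurable (h01 · i) 2
  have hES : ∫ ω, S ω ∂μ = (n - 1) * p := by
    rw [integral_finsetSum _ fun i _ => ?_,
      sum_eq_card_nsmul fun i hi => hp i (ne_of_mem_erase hi), nsmul_eq_mul, hcard]
    exact (memLp_of_zero_or_one (hA i).aestronglyMeasurable (h01 · i) 1).integrable le_rfl
  have hES2 : ∫ ω, S ω ^ 2 ∂μ = (n - 1) * p * (1 - p) + ((n - 1) * p) ^ 2 := by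
    rw [integral_sum_sq_of_pairwise_indepFun (fun i _ => (hA i).aestronglyMeasurable)
      (fun i _ ω => h01 ω i) (fun i hi => hp i (ne_of_mem_erase hi)) hindep, hcard]
  calc ∫ ω, centeredGram (1 + t • A ω) j j ∂μ
      = ∫ ω, (1 - 1 / n) + (t ^ 2 - 2 * t / n) * S ω - t ^ 2 / n * S ω ^ 2 ∂μ := by
        refine integral_congr_ae (ae_of_all _ fun ω => ?_)
        beta_reduce
        rw [centeredGram_one_add_smul_apply_self _ _ _ (h01 ω) (hjj ω), ← hn,
          ← sum_erase (f := fun i => A ω i j) univ (hjj ω)]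
        ring
    _ = (1 - 1 / n) + (t ^ 2 - 2 * t / n) * ∫ ω, S ω ∂μ
          - t ^ 2 / n * ∫ ω, S ω ^ 2 ∂μ := by
        have hS : Integrable S μ := hL2.integrable one_le_two
        rw [integral_sub, integral_add, integral_const, integral_const_mul, integral_const_mul]
        · simp
        · exact integrable_const _
        · exact hS.const_mul _
        · exact (integrable_const _).add (hS.const_mul _)
        · exact hL2.integrable_sq.const_mul _
    _ = _ := by
        rw [hES, hES2]
        ring

end ErdosRenyi

theorem GMA1_ER_centered_norm_expectation_general
    {Ω : Type*} [MeasurableSpace Ω] (μ : Measure Ω) [IsProbabilityMeasure μ]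
    (N : ℕ) (hN : 2 ≤ N) (α θ a σ : ℝ) (hα : α ∈ Set.Icc (0 : ℝ) 1)
    (A : Ω → Matrix (Fin N) (Fin N) ℝ)
    (hAmeas : ∀ i j, Measurable fun ω => A ω i j)
    (hdiag : ∀ ω i, A ω i i = 0)
    (hAbin : ∀ ω (i j : Fin N), i ≠ j → (A ω i j = 0 ∨ A ω i j = 1))
    (hAindep : iIndepFun
      (fun x : {x : Fin N × Fin N // x.1 ≠ x.2} => fun ω => A ω x.1.1 x.1.2) μ)
    (hAprob : ∀ i j : Fin N, i ≠ j → μ {ω | A ω i j = 1} = ENNReal.ofReal α)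
    (y : Ω → Fin N → ℝ)
    (hindep : IndepFun (fun ω => fun i j => A ω i j) y μ)
    (hint : ∀ i j, Integrable (fun ω => y ω i * y ω j) μ)
    (hvar : ∀ i, ∫ ω, (y ω i) ^ 2 ∂μ = σ ^ 2)
    (hcov : ∀ i j, i ≠ j → ∫ ω, y ω i * y ω j ∂μ = 0) :
    ∫ ω, ∑ i, (((1 + (θ * a) • A ω) *ᵥ y ω) i
        - (∑ j, ((1 + (θ * a) • A ω) *ᵥ y ω) j) / N) ^ 2 ∂μ
      = σ ^ 2 * ((N : ℝ) - 1)
        * (1 - 2 * θ * a * α + θ ^ 2 * a ^ 2 * α * (((N : ℝ) - 1) * (1 - α) + α)) := by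
  have h01 : ∀ ω i j, A ω i j = 0 ∨ A ω i j = 1 := fun ω i j =>
    (eq_or_ne i j).elim (fun h => .inl (h ▸ hdiag ω i)) (hAbin ω i j)
  have hmean : ∀ i j, i ≠ j → ∫ ω, A ω i j ∂μ = α := fun i j h => by
    rw [integral_eq_measureReal_of_zero_or_one (hAmeas i j) (h01 · i j), measureReal_def,
      hAprob i j h, ENNReal.toReal_ofReal hα.1]
  have hcol : ∀ j, Set.Pairwise (univ.erase j : Finset (Fin N))
      fun i k => (fun ω => A ω i j) ⟂ᵢ[μ] fun ω => A ω k j := fun j i hi k hk hik =>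
    hAindep.indepFun (i := ⟨(i, j), ne_of_mem_erase hi⟩) (j := ⟨(k, j), ne_of_mem_erase hk⟩)
      (by simpa using hik)
  have hdiag_int : ∀ j, ∫ ω, centeredGram (1 + (θ * a) • A ω) j j ∂μ = _ := fun j =>
    integral_centeredGram_one_add_smul_apply_self (hAmeas · j) (h01 · · j) (hdiag · j)
      (hmean · j) (hcol j) (θ * a)
  calc _ = ∫ ω, ∑ j, ∑ l,
        centeredGram (1 + (θ * a) • A ω) j l * (y ω j * y ω l) ∂μ :=
        integral_congr_ae (ae_of_all _ fun ω => by
          simpa using sum_sub_average_mulVec_sq (1 + (θ * a) • A ω) (y ω))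
    _ = σ ^ 2 * ∑ j, ∫ ω, centeredGram (1 + (θ * a) • A ω) j j ∂μ :=
        integral_sum_mul_mul_of_indepFun hindep (c := fun x => centeredGram (1 + (θ * a) • of x))
          (fun j l => (continuous_centeredGram_one_add_smul_of (θ * a) j l).measurable)
          (integrable_centeredGram_one_add_smul hAmeas h01 (θ * a)) hint hvar hcov
    _ = _ := by
      simp only [hdiag_int, sum_const, card_univ, Fintype.card_fin, nsmul_eq_mul]
      have hN0 : (N : ℝ) ≠ 0 := by exact_mod_cast (by omega : N ≠ 0)
      field_simp
      ring

/-- **Expected squared norm of the centered GMA(1) signal on an Erdős–Rényi graph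
(Appendix B of the paper).** Let `A` be a random `N×N` matrix with zero diagonal whose
off-diagonal entries are mutually independent Bernoulli(α) variables, and let `y` be a
random vector, independent of `A`, with uncorrelated components of mean-zero-type second
moments `E[yᵢ²] = σ²`, `E[yᵢ yⱼ] = 0` (`i ≠ j`). With `z = (I + θa A)y` and
`z̃ = z − z̄·1`, one has
`E[‖z̃‖²] = σ²(N−1)(1 − 2θaα + θ²a²α((N−1)(1−α) + α))`. -/
theorem GMA1_ER_centered_norm_expectation
    {Ω : Type*} [MeasurableSpace Ω] (μ : Measure Ω) [IsProbabilityMeasure μ]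
    (N : ℕ) (hN : 2 ≤ N) (α θ a σ : ℝ) (hα : α ∈ Set.Icc (0 : ℝ) 1)
    (A : Ω → Matrix (Fin N) (Fin N) ℝ)
    (hAmeas : ∀ i j, Measurable fun ω => A ω i j)
    (hdiag : ∀ ω i, A ω i i = 0)
    (hAbin : ∀ ω (i j : Fin N), i ≠ j → (A ω i j = 0 ∨ A ω i j = 1))
    (hAindep : iIndepFun
      (fun x : {x : Fin N × Fin N // x.1 ≠ x.2} => fun ω => A ω x.1.1 x.1.2) μ)
    (hAprob : ∀ i j : Fin N, i ≠ j → μ {ω | A ω i j = 1} = ENNReal.ofReal α)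
    (y : Ω → Fin N → ℝ) (hymeas : ∀ i, Measurable fun ω => y ω i)
    (hindep : IndepFun (fun ω => fun i j => A ω i j) y μ)
    (hint : ∀ i j, Integrable (fun ω => y ω i * y ω j) μ)
    (hvar : ∀ i, ∫ ω, (y ω i) ^ 2 ∂μ = σ ^ 2)
    (hcov : ∀ i j, i ≠ j → ∫ ω, y ω i * y ω j ∂μ = 0) :
    ∫ ω, ∑ i, (((1 + (θ * a) • A ω) *ᵥ y ω) i
        - (∑ j, ((1 + (θ * a) • A ω) *ᵥ y ω) j) / N) ^ 2 ∂μ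
      = σ ^ 2 * ((N : ℝ) - 1)
        * (1 - 2 * θ * a * α + θ ^ 2 * a ^ 2 * α * (((N : ℝ) - 1) * (1 - α) + α)) :=
  GMA1_ER_centered_norm_expectation_general μ N hN α θ a σ hα A hAmeas hdiag hAbin hAindep hAprob y
    hindep hint hvar hcov
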